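/- arXiv:1011.3740 — 4 statements merged into one kernel-verified Lean document; each statement's English description precedes it below -/
import Mathlib

section
/- Let Λ and Γ be finite dimensional algebras, with Λ separably dividing Γ through bimodules X and Y. If M is a finitely generated Γ-module which is a generator of mod Γ, then the Λ-module X ⊗_Γ M is a generator of mod Λ. -/
/-!
Writing the image of `1` in `X ⊗_Γ Y` as `∑ xₖ ⊗ yₖ` and composing the retraction `X ⊗_Γ Y → Λ`
with `- ⊗ yₖ` gives functionals `φₖ : X → Λ` with `∑ φₖ xₖ = 1`, so `Λ ∈ add X`. Since
`Γ ∈ add M`, applying `X ⊗_Γ -` gives `X ∈ add (X ⊗_Γ M)`, and `add` is transitive.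
-/

noncomputable section


/-- Projective dimension of `M` is at most `d`. -/
def PdLE (R : Type) [Ring R] : ℕ → (M : Type) → (i1 : AddCommGroup M) →
    (@Module R M _ i1.toAddCommMonoid) → Prop
  | 0, M, i1, i2 => letI := i1; letI := i2; Module.Projective R M
  | (d+1), M, i1, i2 =>
      letI := i1; letI := i2;
      ∃ (P : Type) (iP1 : AddCommGroup P) (iP2 : Module R P)
        (K : Type) (iK1 : AddCommGroup K) (iK2 : Module R K),
        letI := iP1; letI := iP2; letI := iK1; letI := iK2;
        Module.Projective R P ∧
        ∃ (ι : K →ₗ[R] P) (π : P →ₗ[R] M),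
          Function.Injective ι ∧ Function.Surjective π ∧
          LinearMap.range ι = LinearMap.ker π ∧ PdLE R d K iK1 iK2

/-- The global dimension of `R` is at most `d`. -/
def GldimLE (R : Type) [Ring R] (d : ℕ) : Prop :=
  ∀ (M : Type) (i1 : AddCommGroup M) (i2 : @Module R M _ i1.toAddCommMonoid),
    PdLE R d M i1 i2

/-- The global dimension of `R`, as an element of `ℕ∞`. -/
def globalDim (R : Type) [Ring R] : ℕ∞ :=
  sInf {n : ℕ∞ | ∃ d : ℕ, n = d ∧ GldimLE R d}

/-- `N` belongs to `add M`: it is a direct summand of a finite direct sum of copies of `M`. -/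
def InAdd (R : Type) [Ring R] (M : Type) [AddCommGroup M] [Module R M]
    (N : Type) [AddCommGroup N] [Module R N] : Prop :=
  ∃ (t : ℕ) (ι : N →ₗ[R] (Fin t → M)) (π : (Fin t → M) →ₗ[R] N), π.comp ι = LinearMap.id

/-- `M` is a generator for the module category of `R`. -/
def IsGenerator (R : Type) [Ring R] (M : Type) [AddCommGroup M] [Module R M] : Prop :=
  InAdd R M R

/-- `M` is a cogenerator: every finitely generated injective module is in `add M`. -/
def IsCogenerator (R : Type) [Ring R] (M : Type) [AddCommGroup M] [Module R M] : Prop :=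
  ∀ (I : Type) (i1 : AddCommGroup I) (i2 : Module R I),
    letI := i1; letI := i2;
    Module.Finite R I → Module.Injective R I → InAdd R M I

/-- The representation dimension of `R`. -/
def RepDim (R : Type) [Ring R] : ℕ∞ :=
  sInf {n : ℕ∞ | ∃ (M : Type) (i1 : AddCommGroup M) (i2 : Module R M),
    letI := i1; letI := i2;
    Module.Finite R M ∧ IsGenerator R M ∧ IsCogenerator R M ∧
      n = globalDim (Module.End R M)}



section Bimod

variable (Λ Γ : Type) [Ring Λ] [Ring Γ]

/-- Right multiplication by `g : Γ` on a `Λ`-`Γ`-bimodule `X`, as a `Λ`-linear map. -/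
def rmulHom (X : Type) [AddCommGroup X] [Module Λ X] [Module Γᵐᵒᵖ X]
    [SMulCommClass Λ Γᵐᵒᵖ X] (g : Γ) : X →ₗ[Λ] X where
  toFun x := (MulOpposite.op g) • x
  map_add' a b := smul_add _ a b
  map_smul' a x := (smul_comm a (MulOpposite.op g) x).symm

/-- The left `Γ`-module structure on `Hom_Λ(X, J)`, where `X` is a `Λ`-`Γ`-bimodule and `J`
a `Λ`-module: `(g • h) x = h (x • g)`. -/
def homModule (X : Type) [AddCommGroup X] [Module Λ X] [Module Γᵐᵒᵖ X]
    [SMulCommClass Λ Γᵐᵒᵖ X] (J : Type) [AddCommGroup J] [Module Λ J] :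
    Module Γ (X →ₗ[Λ] J) where
  smul g h := h.comp (rmulHom Λ Γ X g)
  one_smul h := by
    ext x
    show h ((MulOpposite.op (1 : Γ)) • x) = h x
    simp
  mul_smul g₁ g₂ h := by
    ext x
    show h ((MulOpposite.op (g₁ * g₂)) • x) =
      h ((MulOpposite.op g₂) • (MulOpposite.op g₁) • x)
    rw [MulOpposite.op_mul, mul_smul]
  smul_zero g := by
    ext x
    rfl
  smul_add g h₁ h₂ := by
    ext x
    rfl
  add_smul g₁ g₂ h := by
    ext x
    show h ((MulOpposite.op (g₁ + g₂)) • x) =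
      h ((MulOpposite.op g₁) • x) + h ((MulOpposite.op g₂) • x)
    rw [MulOpposite.op_add, add_smul, map_add]
  zero_smul h := by
    ext x
    show h ((MulOpposite.op (0 : Γ)) • x) = 0
    simp

/-- `(T, β)` is the tensor product `X ⊗_Γ Y` of the `Λ`-`Γ`-bimodule `X` and the
`Γ`-`Λ`-bimodule `Y`, as a `Λ`-`Λ`-bimodule, characterized by its universal property. -/
def IsBimodTensor
    (X : Type) [AddCommGroup X] [Module Λ X] [Module Γᵐᵒᵖ X] [SMulCommClass Λ Γᵐᵒᵖ X]
    (Y : Type) [AddCommGroup Y] [Module Γ Y] [Module Λᵐᵒᵖ Y] [SMulCommClass Γ Λᵐᵒᵖ Y]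
    (T : Type) [AddCommGroup T] [Module Λ T] [Module Λᵐᵒᵖ T] [SMulCommClass Λ Λᵐᵒᵖ T]
    (β : X → Y → T) : Prop :=
  (∀ x₁ x₂ y, β (x₁ + x₂) y = β x₁ y + β x₂ y) ∧
  (∀ x y₁ y₂, β x (y₁ + y₂) = β x y₁ + β x y₂) ∧
  (∀ (a : Λ) x y, β (a • x) y = a • β x y) ∧
  (∀ (a : Λᵐᵒᵖ) x y, β x (a • y) = a • β x y) ∧
  (∀ (g : Γ) x y, β ((MulOpposite.op g) • x) y = β x (g • y)) ∧
  (∀ (W : Type) (i1 : AddCommGroup W) (i2 : Module Λ W) (i3 : Module Λᵐᵒᵖ W)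
      (i4 : SMulCommClass Λ Λᵐᵒᵖ W),
    ∀ b : X → Y → W,
      (∀ x₁ x₂ y, b (x₁ + x₂) y = b x₁ y + b x₂ y) →
      (∀ x y₁ y₂, b x (y₁ + y₂) = b x y₁ + b x y₂) →
      (∀ (a : Λ) x y, b (a • x) y = a • b x y) →
      (∀ (a : Λᵐᵒᵖ) x y, b x (a • y) = a • b x y) →
      (∀ (g : Γ) x y, b ((MulOpposite.op g) • x) y = b x (g • y)) →
      ∃! h : T → W,
        (∀ t₁ t₂, h (t₁ + t₂) = h t₁ + h t₂) ∧
        (∀ (a : Λ) t, h (a • t) = a • h t) ∧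
        (∀ (a : Λᵐᵒᵖ) t, h (a • t) = a • h t) ∧
        (∀ x y, h (β x y) = b x y))

/-- `Λ` is a direct summand of the `Λ`-`Λ`-bimodule `T`. -/
def IsBimodSummand (T : Type) [AddCommGroup T] [Module Λ T] [Module Λᵐᵒᵖ T]
    [SMulCommClass Λ Λᵐᵒᵖ T] : Prop :=
  ∃ (i : Λ → T) (p : T → Λ),
    (∀ a b : Λ, i (a + b) = i a + i b) ∧ (∀ (a : Λ) (c : Λ), i (a * c) = a • i c) ∧
    (∀ (a : Λ) (c : Λ), i (c * a) = (MulOpposite.op a) • i c) ∧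
    (∀ t₁ t₂, p (t₁ + t₂) = p t₁ + p t₂) ∧ (∀ (a : Λ) t, p (a • t) = a * p t) ∧
    (∀ (a : Λ) t, p ((MulOpposite.op a) • t) = p t * a) ∧
    (∀ a : Λ, p (i a) = a)

/-- `(J, γ)` is the induced `Λ`-module `X ⊗_Γ M`, characterized by its universal
property. -/
def IsInducedModule
    (X : Type) [AddCommGroup X] [Module Λ X] [Module Γᵐᵒᵖ X] [SMulCommClass Λ Γᵐᵒᵖ X]
    (M : Type) [AddCommGroup M] [Module Γ M]
    (J : Type) [AddCommGroup J] [Module Λ J] (γ : X → M → J) : Prop :=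
  (∀ x₁ x₂ m, γ (x₁ + x₂) m = γ x₁ m + γ x₂ m) ∧
  (∀ x m₁ m₂, γ x (m₁ + m₂) = γ x m₁ + γ x m₂) ∧
  (∀ (a : Λ) x m, γ (a • x) m = a • γ x m) ∧
  (∀ (g : Γ) x m, γ ((MulOpposite.op g) • x) m = γ x (g • m)) ∧
  (∀ (W : Type) (i1 : AddCommGroup W) (i2 : Module Λ W),
    ∀ b : X → M → W,
      (∀ x₁ x₂ m, b (x₁ + x₂) m = b x₁ m + b x₂ m) →
      (∀ x m₁ m₂, b x (m₁ + m₂) = b x m₁ + b x m₂) →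
      (∀ (a : Λ) x m, b (a • x) m = a • b x m) →
      (∀ (g : Γ) x m, b ((MulOpposite.op g) • x) m = b x (g • m)) →
      ∃! h : J →ₗ[Λ] W, ∀ x m, h (γ x m) = b x m)

end Bimod

section InAdd

variable {R : Type} [Ring R] {M N P : Type} [AddCommGroup M] [Module R M]
  [AddCommGroup N] [Module R N] [AddCommGroup P] [Module R P]

theorem InAdd.of_sum_comp_eq_id {ι : Type*} [Fintype ι] (f : ι → N →ₗ[R] M)
    (g : ι → M →ₗ[R] N) (h : ∑ i, (g i).comp (f i) = LinearMap.id) : InAdd R M N := by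
  classical
  let e := (Fintype.equivFin ι).symm
  refine ⟨Fintype.card ι, LinearMap.pi fun j => f (e j),
    ∑ j, (g (e j)).comp (LinearMap.proj j), ?_⟩
  rw [← h, ← e.sum_comp]
  ext n
  simp

theorem InAdd.exists_sum_comp_eq_id (h : InAdd R M N) :
    ∃ (t : ℕ) (f : Fin t → N →ₗ[R] M) (g : Fin t → M →ₗ[R] N),
      ∑ j, (g j).comp (f j) = LinearMap.id := by
  classical
  obtain ⟨t, ι, π, hπι⟩ := h
  refine ⟨t, fun j => (LinearMap.proj j).comp ι,
    fun j => π.comp (LinearMap.single R (fun _ => M) j), ?_⟩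
  rw [← hπι]
  ext n
  simp [← map_sum, Finset.univ_sum_single]

theorem InAdd.trans (hMN : InAdd R M N) (hNP : InAdd R N P) : InAdd R M P := by
  obtain ⟨t, f, g, hfg⟩ := hMN.exists_sum_comp_eq_id
  obtain ⟨u, f', g', hfg'⟩ := hNP.exists_sum_comp_eq_id
  refine .of_sum_comp_eq_id (fun jk : Fin t × Fin u => (f jk.1).comp (f' jk.2))
    (fun jk => (g' jk.2).comp (g jk.1)) ?_
  rw [← hfg', Fintype.sum_prod_type, Finset.sum_comm]
  refine Finset.sum_congr rfl fun k _ => ?_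
  ext p
  simpa using congr(g' k ($hfg (f' k p)))

theorem inAdd_ring_iff_exists_sum_apply_eq_one :
    InAdd R M R ↔ ∃ (n : ℕ) (x : Fin n → M) (φ : Fin n → M →ₗ[R] R), ∑ k, φ k (x k) = 1 := by
  constructor
  · intro h
    obtain ⟨n, f, φ, hfφ⟩ := h.exists_sum_comp_eq_id
    exact ⟨n, fun k => f k 1, φ, by simpa using congr($hfφ 1)⟩
  · rintro ⟨n, x, φ, hxφ⟩
    refine .of_sum_comp_eq_id (fun k => LinearMap.toSpanSingleton R M (x k)) φ ?_
    ext
    simpa using hxφ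

end InAdd

section QuotientBimodule

variable {R S M : Type*} [Ring R] [Ring S] [AddCommGroup M] [Module R M] [Module S M]
  [SMulCommClass R S M] (p : Submodule R M) (hp : ∀ (s : S), ∀ m ∈ p, s • m ∈ p)

abbrev Submodule.Quotient.moduleOfSMulMem : Module S (M ⧸ p) :=
  haveI := SMulCommClass.symm R S M
  letI : SMul S (M ⧸ p) := ⟨fun s => p.mapQ p (DistribSMul.toLinearMap R M s) (hp s)⟩
  Function.Surjective.module S p.mkQ.toAddMonoidHom p.mkQ_surjective fun _ _ => rfl

theorem Submodule.Quotient.smulCommClass_of_smul_mem :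
    letI := Submodule.Quotient.moduleOfSMulMem p hp
    SMulCommClass R S (M ⧸ p) := by
  let _ := Submodule.Quotient.moduleOfSMulMem p hp
  refine ⟨fun r s q => ?_⟩
  obtain ⟨m, rfl⟩ := p.mkQ_surjective q
  exact congrArg p.mkQ (smul_comm r s m)

end QuotientBimodule

section Bimodules

variable {Λ Γ : Type} [Ring Λ] [Ring Γ]
  {X : Type} [AddCommGroup X] [Module Λ X] [Module Γᵐᵒᵖ X] [SMulCommClass Λ Γᵐᵒᵖ X]
  {Y : Type} [AddCommGroup Y] [Module Γ Y] [Module Λᵐᵒᵖ Y] [SMulCommClass Γ Λᵐᵒᵖ Y]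
  {T : Type} [AddCommGroup T] [Module Λ T] [Module Λᵐᵒᵖ T] [SMulCommClass Λ Λᵐᵒᵖ T]
  {β : X → Y → T}

theorem IsBimodTensor.span_range_eq_top (hT : IsBimodTensor Λ Γ X Y T β) :
    Submodule.span Λ (Set.range (Function.uncurry β)) = ⊤ := by
  obtain ⟨-, -, -, hβr, -, huniv⟩ := hT
  set D := Submodule.span Λ (Set.range (Function.uncurry β))
  have hD : ∀ (a : Λᵐᵒᵖ), ∀ t ∈ D, a • t ∈ D := by
    intro a t ht
    induction ht using Submodule.span_induction with
    | mem _ h =>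
      obtain ⟨⟨x, y⟩, rfl⟩ := h
      exact Submodule.subset_span ⟨(x, a • y), hβr a x y⟩
    | zero => simp
    | add _ _ _ _ h₁ h₂ => simpa [smul_add] using D.add_mem h₁ h₂
    | smul c _ _ h => simpa [smul_comm c a] using D.smul_mem c h
  let _ := Submodule.Quotient.moduleOfSMulMem D hD
  have _ := Submodule.Quotient.smulCommClass_of_smul_mem D hD
  have hunique := huniv (T ⧸ D) inferInstance inferInstance inferInstance inferInstance
    (fun _ _ => 0) (by simp) (by simp) (by simp) (by simp) (by simp)
  -- both `mkQ` and `0` solve the universal problem for the zero pairing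
  have hmkQ : ⇑D.mkQ = 0 := hunique.unique
    ⟨map_add D.mkQ, map_smul D.mkQ, fun _ _ => rfl,
      fun x y => (Submodule.Quotient.mk_eq_zero D).2 (Submodule.subset_span ⟨(x, y), rfl⟩)⟩
    ⟨by simp, by simp, by simp, by simp⟩
  exact Submodule.eq_top_iff'.2 fun t => (Submodule.Quotient.mk_eq_zero D).1 (congrFun hmkQ t)

theorem IsBimodTensor.exists_sum_eq (hT : IsBimodTensor Λ Γ X Y T β) (t : T) :
    ∃ (n : ℕ) (x : Fin n → X) (y : Fin n → Y), ∑ k, β (x k) (y k) = t := by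
  obtain ⟨n, c, g, rfl⟩ :=
    Submodule.mem_span_set'.1 (hT.span_range_eq_top.ge (Submodule.mem_top (x := t)))
  choose xy hxy using fun k => (g k).2
  refine ⟨n, fun k => c k • (xy k).1, fun k => (xy k).2, Finset.sum_congr rfl fun k _ => ?_⟩
  rw [hT.2.2.1, ← hxy k]
  rfl

theorem IsBimodTensor.inAdd_ring_of_isBimodSummand (hT : IsBimodTensor Λ Γ X Y T β)
    (hsum : IsBimodSummand Λ T) : InAdd Λ X Λ := by
  obtain ⟨i, p, -, -, -, hp_add, hp_smul, -, hpi⟩ := hsum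
  obtain ⟨n, x, y, hxy⟩ := hT.exists_sum_eq (i 1)
  let pL : T →ₗ[Λ] Λ := ⟨⟨p, hp_add⟩, hp_smul⟩
  let βL (y : Y) : X →ₗ[Λ] T := ⟨⟨(β · y), fun x₁ x₂ => hT.1 x₁ x₂ y⟩, fun a x => hT.2.2.1 a x y⟩
  refine inAdd_ring_iff_exists_sum_apply_eq_one.2 ⟨n, x, fun k => pL ∘ₗ βL (y k), ?_⟩
  calc ∑ k, (pL ∘ₗ βL (y k)) (x k) = p (∑ k, β (x k) (y k)) := (map_sum pL _ _).symm
    _ = 1 := by rw [hxy, hpi]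

variable {M : Type} [AddCommGroup M] [Module Γ M] {J : Type} [AddCommGroup J] [Module Λ J]
  {γ : X → M → J}

theorem IsInducedModule.exists_lift_op_smul (hJ : IsInducedModule Λ Γ X M J γ)
    (φ : M →ₗ[Γ] Γ) : ∃ h : J →ₗ[Λ] X, ∀ x m, h (γ x m) = MulOpposite.op (φ m) • x :=
  (hJ.2.2.2.2 X inferInstance inferInstance (fun x m => MulOpposite.op (φ m) • x)
    (fun _ _ _ => smul_add _ _ _) (fun _ _ _ => by simp [add_smul])
    (fun a x _ => (smul_comm a _ x).symm)
    (fun g x m => by simp [smul_smul, ← MulOpposite.op_mul])).exists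

theorem IsInducedModule.inAdd_of_inAdd_ring (hJ : IsInducedModule Λ Γ X M J γ)
    (hM : InAdd Γ M Γ) : InAdd Λ J X := by
  obtain ⟨n, m, φ, hmφ⟩ := inAdd_ring_iff_exists_sum_apply_eq_one.1 hM
  choose h hh using fun k => hJ.exists_lift_op_smul (φ k)
  let γL (m : M) : X →ₗ[Λ] J := ⟨⟨(γ · m), fun x₁ x₂ => hJ.1 x₁ x₂ m⟩, fun a x => hJ.2.2.1 a x m⟩
  refine .of_sum_comp_eq_id (fun k => γL (m k)) h ?_
  ext x
  calc (∑ k, h k ∘ₗ γL (m k)) x = ∑ k, h k (γ x (m k)) := LinearMap.sum_apply _ _ _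
    _ = ∑ k, MulOpposite.op (φ k (m k)) • x := by simp [hh]
    _ = x := by rw [← Finset.sum_smul, ← Finset.op_sum, hmφ, MulOpposite.op_one, one_smul]

end Bimodules

theorem stmt_3_general (Λ Γ : Type) [Ring Λ] [Ring Γ]
    (X : Type) [AddCommGroup X] [Module Λ X] [Module Γᵐᵒᵖ X] [SMulCommClass Λ Γᵐᵒᵖ X]
    (Y : Type) [AddCommGroup Y] [Module Γ Y] [Module Λᵐᵒᵖ Y] [SMulCommClass Γ Λᵐᵒᵖ Y]
    (T : Type) [AddCommGroup T] [Module Λ T] [Module Λᵐᵒᵖ T] [SMulCommClass Λ Λᵐᵒᵖ T]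
    (β : X → Y → T) (hT : IsBimodTensor Λ Γ X Y T β)
    (hsum : IsBimodSummand Λ T)
    (M : Type) [AddCommGroup M] [Module Γ M]
    (hgen : InAdd Γ M Γ)
    (J : Type) [AddCommGroup J] [Module Λ J] (γ : X → M → J)
    (hJ : IsInducedModule Λ Γ X M J γ) :
    InAdd Λ J Λ :=
  (hJ.inAdd_of_inAdd_ring hgen).trans (hT.inAdd_ring_of_isBimodSummand hsum)

/-- Proposition 2.4: if the finite dimensional algebra `Λ` separably divides `Γ` through
bimodules `X` and `Y`, and `M` is a finitely generated generator of `mod Γ`, then the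
`Λ`-module `X ⊗_Γ M` is a generator of `mod Λ`. -/
theorem stmt_3 (k Λ Γ : Type) [Field k]
    [Ring Λ] [Algebra k Λ] [FiniteDimensional k Λ]
    [Ring Γ] [Algebra k Γ] [FiniteDimensional k Γ]
    (X : Type) [AddCommGroup X] [Module Λ X] [Module Γᵐᵒᵖ X] [SMulCommClass Λ Γᵐᵒᵖ X]
    (Y : Type) [AddCommGroup Y] [Module Γ Y] [Module Λᵐᵒᵖ Y] [SMulCommClass Γ Λᵐᵒᵖ Y]
    (hX1 : Module.Projective Λ X) (hX2 : Module.Projective Γᵐᵒᵖ X)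
    (hY1 : Module.Projective Γ Y) (hY2 : Module.Projective Λᵐᵒᵖ Y)
    (T : Type) [AddCommGroup T] [Module Λ T] [Module Λᵐᵒᵖ T] [SMulCommClass Λ Λᵐᵒᵖ T]
    (β : X → Y → T) (hT : IsBimodTensor Λ Γ X Y T β)
    (hsum : IsBimodSummand Λ T)
    (M : Type) [AddCommGroup M] [Module Γ M] [Module.Finite Γ M]
    (hgen : InAdd Γ M Γ)
    (J : Type) [AddCommGroup J] [Module Λ J] (γ : X → M → J)
    (hJ : IsInducedModule Λ Γ X M J γ) :
    InAdd Λ J Λ :=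
  stmt_3_general Λ Γ X Y T β hT hsum M hgen J γ hJ

end
end

section
/- Let Λ be a finite dimensional symmetric algebra and Γ a parabolic subalgebra such that μ(c_Γ^Λ) is invertible in Λ. Then for every i ≥ 0 and all finitely generated Λ-modules M and N, the restriction map Ext^i_Λ(M,N) → Ext^i_Γ(M,N) is injective. -/
noncomputable section


/-- `s` is a symmetrizing form on the finite dimensional `k`-algebra `Λ`: a linear form
which is symmetric (`s(xy) = s(yx)`) and nondegenerate. -/
def IsSymmetrizingForm (k : Type) [Field k] (Λ : Type) [Ring Λ] [Algebra k Λ]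
    (s : Λ →ₗ[k] k) : Prop :=
  (∀ a b : Λ, s (a * b) = s (b * a)) ∧ (∀ a : Λ, a ≠ 0 → ∃ b : Λ, s (a * b) ≠ 0)

/-- `Γ` (embedded into `Λ` by `ι`) is a parabolic subalgebra of the symmetric algebra
`(Λ, s)`: the restriction of `s` to `Γ` is a symmetrizing form for `Γ`, and `Λ` is finitely
generated projective as a `Γ`-module. -/
def IsParabolic (k : Type) [Field k] (Λ : Type) [Ring Λ] [Algebra k Λ]
    (Γ : Type) [Ring Γ] [Algebra k Γ] (s : Λ →ₗ[k] k) (ι : Γ →ₐ[k] Λ) : Prop :=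
  Function.Injective ι ∧
  IsSymmetrizingForm k Γ (s.comp ι.toLinearMap) ∧
  (letI : Module Γ Λ := Module.compHom Λ ι.toRingHom
   Module.Projective Γ Λ ∧ Module.Finite Γ Λ)

/-- The families `x, y` and the projection `pr : Λ → Γ` represent the relative Casimir
element `c_Γ^Λ = Σᵢ xᵢ ⊗ yᵢ ∈ Λ ⊗_Γ Λ`: `pr` is the `Γ`-`Γ`-bimodule projection of `Λ`
onto `Γ` along a complement contained in `Ker s`, and `x, y` form a pair of relative dual
bases with respect to the symmetrizing form. -/
def IsCasimirData (k : Type) [Field k] (Λ : Type) [Ring Λ] [Algebra k Λ]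
    (Γ : Type) [Ring Γ] [Algebra k Γ] (s : Λ →ₗ[k] k) (ι : Γ →ₐ[k] Λ)
    {t : ℕ} (x y : Fin t → Λ) (pr : Λ →ₗ[k] Γ) : Prop :=
  (∀ g : Γ, pr (ι g) = g) ∧
  (∀ (g g' : Γ) (a : Λ), pr (ι g * a * ι g') = g * pr a * g') ∧
  (∀ a : Λ, s (ι (pr a)) = s a) ∧
  (∀ a : Λ, a = ∑ i, x i * ι (pr (y i * a))) ∧
  (∀ a : Λ, a = ∑ i, ι (pr (a * x i)) * y i)

/-!
Relative Higman criterion. For relative dual bases `x, y` the relative Casimir element is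
`c = Σᵢ xᵢ ⊗ yᵢ`, so `μ(c) = Σᵢ xᵢ yᵢ`. The relative trace `tr_Γ^Λ(r) = Σᵢ xᵢ r(yᵢ -)` of a
`Γ`-linear map `r` is `Λ`-linear. If `r` is a left inverse of a `Λ`-linear map `u`, then
`tr_Γ^Λ(r) ∘ u` is multiplication by `μ(c)`; when `μ(c)` is a central unit,
`μ(c)⁻¹ tr_Γ^Λ(r)` is a `Λ`-linear left inverse of `u`. So an extension of `Λ`-modules that
splits over `Γ` splits over `Λ`. In degree `0`, restriction does not change the underlying
map.
-/

section RelativeTrace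

variable {Γ Λ : Type*} [Ring Γ] [Ring Λ] {t : ℕ}
  {E N : Type*} [AddCommGroup E] [Module Λ E] [AddCommGroup N] [Module Λ N]

def IsRelativeDualBasis (ι : Γ →+* Λ) (pr : Λ → Γ) (x y : Fin t → Λ) : Prop :=
  (∀ a : Λ, a = ∑ i, x i * ι (pr (y i * a))) ∧ (∀ a : Λ, a = ∑ i, ι (pr (a * x i)) * y i)

def relativeTrace (x y : Fin t → Λ) (r : E →+ N) (e : E) : N := ∑ i, x i • r (y i • e)

variable {x y : Fin t → Λ} {r : E →+ N}

theorem relativeTrace_add (e e' : E) :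
    relativeTrace x y r (e + e') = relativeTrace x y r e + relativeTrace x y r e' := by
  simp only [relativeTrace, smul_add, map_add, Finset.sum_add_distrib]

variable {ι : Γ →+* Λ} {pr : Λ → Γ}

theorem relativeTrace_smul (hr : ∀ (g : Γ) (e : E), r (ι g • e) = ι g • r e)
    (hxy : IsRelativeDualBasis ι pr x y) (a : Λ) (e : E) :
    relativeTrace x y r (a • e) = a • relativeTrace x y r e := by
  obtain ⟨hx, hy⟩ := hxy
  have expand_y : ∀ i, r (y i • a • e) = ∑ j, ι (pr (y i * a * x j)) • r (y j • e) := by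
    intro i
    conv_lhs => rw [smul_smul, hy (y i * a), Finset.sum_smul, map_sum]
    simp only [mul_smul, hr]
  calc relativeTrace x y r (a • e)
      = ∑ i, ∑ j, (x i * ι (pr (y i * a * x j))) • r (y j • e) := by
        simp only [relativeTrace, expand_y]
        simp only [Finset.smul_sum, smul_smul]
    _ = ∑ j, (∑ i, x i * ι (pr (y i * (a * x j)))) • r (y j • e) := by
        rw [Finset.sum_comm]
        simp only [Finset.sum_smul, mul_assoc]
    _ = a • relativeTrace x y r e := by
        simp only [← hx, relativeTrace, Finset.smul_sum, mul_smul]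

def relativeTraceLinearMap (hr : ∀ (g : Γ) (e : E), r (ι g • e) = ι g • r e)
    (hxy : IsRelativeDualBasis ι pr x y) : E →ₗ[Λ] N where
  toFun := relativeTrace x y r
  map_add' := relativeTrace_add
  map_smul' := relativeTrace_smul hr hxy

theorem relativeTrace_apply_of_leftInverse {u : N →ₗ[Λ] E} (hru : Function.LeftInverse r u)
    (n : N) : relativeTrace x y r (u n) = (∑ i, x i * y i) • n := by
  simp only [relativeTrace, ← u.map_smul, hru _, smul_smul, Finset.sum_smul]

theorem exists_linearMap_leftInverse_of_relativeDualBasis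
    (hr : ∀ (g : Γ) (e : E), r (ι g • e) = ι g • r e) (hxy : IsRelativeDualBasis ι pr x y)
    (hcentral : ∑ i, x i * y i ∈ Set.center Λ) (hunit : IsUnit (∑ i, x i * y i))
    {u : N →ₗ[Λ] E} (hru : Function.LeftInverse r u) :
    ∃ r' : E →ₗ[Λ] N, Function.LeftInverse r' u := by
  refine ⟨(Module.End.smulLeft _ (Set.units_inv_mem_center (a := hunit.unit) hcentral)).comp
    (relativeTraceLinearMap hr hxy), fun n ↦ ?_⟩
  change (↑hunit.unit⁻¹ : Λ) • relativeTrace x y r (u n) = n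
  rw [relativeTrace_apply_of_leftInverse hru, smul_smul, IsUnit.val_inv_mul, one_smul]

end RelativeTrace

theorem stmt_6_general (k : Type) [Field k] (Λ : Type) [Ring Λ] [Algebra k Λ]
    (Γ : Type) [Ring Γ] [Algebra k Γ]
    (s : Λ →ₗ[k] k)
    (ι : Γ →ₐ[k] Λ)
    (t : ℕ) (x y : Fin t → Λ) (pr : Λ →ₗ[k] Γ)
    (hc : IsCasimirData k Λ Γ s ι x y pr)
    (hcentral : ∀ a : Λ, a * (∑ i, x i * y i) = (∑ i, x i * y i) * a)
    (hunit : IsUnit (∑ i, x i * y i)) :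
    -- degree 0: restriction is injective on homomorphisms
    (∀ (M : Type) (iM1 : AddCommGroup M) (iM2 : Module Λ M)
       (N : Type) (iN1 : AddCommGroup N) (iN2 : Module Λ N),
      Module.Finite Λ M → Module.Finite Λ N →
      letI : Module Γ M := Module.compHom M ι.toRingHom
      letI : Module Γ N := Module.compHom N ι.toRingHom
      Function.Injective (fun (f : M →ₗ[Λ] N) =>
        ({ toFun := f, map_add' := f.map_add,
           map_smul' := fun (g : Γ) (m : M) => f.map_smul (ι g) m } : M →ₗ[Γ] N))) ∧
    -- degrees `i ≥ 1`: extensions of `Λ`-modules splitting over `Γ` split over `Λ`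
    (∀ (M : Type) (iM1 : AddCommGroup M) (iM2 : Module Λ M)
       (N : Type) (iN1 : AddCommGroup N) (iN2 : Module Λ N)
       (E : Type) (iE1 : AddCommGroup E) (iE2 : Module Λ E),
      Module.Finite Λ M → Module.Finite Λ N → Module.Finite Λ E →
      ∀ (u : N →ₗ[Λ] E) (v : E →ₗ[Λ] M),
        Function.Injective u → Function.Surjective v →
        LinearMap.range u = LinearMap.ker v →
        (letI : Module Γ E := Module.compHom E ι.toRingHom
         letI : Module Γ N := Module.compHom N ι.toRingHom
         ∃ r : E →ₗ[Γ] N, ∀ z : N, r (u z) = z) →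
        (∃ r : E →ₗ[Λ] N, ∀ z : N, r (u z) = z)) := by
  obtain ⟨-, -, -, hx, hy⟩ := hc
  constructor
  · intro M _ _ N _ _ _ _ f g hfg
    exact LinearMap.ext fun m ↦ DFunLike.congr_fun hfg m
  · intro M _ _ N _ _ E _ _ _ _ _ u v _ _ _ hsplit
    let : Module Γ E := Module.compHom E ι.toRingHom
    let : Module Γ N := Module.compHom N ι.toRingHom
    obtain ⟨r, hru⟩ := hsplit
    exact exists_linearMap_leftInverse_of_relativeDualBasis (r := r.toAddMonoidHom)
      (ι := ι.toRingHom) (fun g e ↦ r.map_smul g e) ⟨hx, hy⟩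
      (Semigroup.mem_center_iff.mpr hcentral) hunit hru

/-- Proposition 3.3: if `Λ` is a finite dimensional symmetric algebra and `Γ` a parabolic
subalgebra such that `μ(c_Γ^Λ)` is invertible in `Λ`, then for every `i ≥ 0` the restriction
map `Ext^i_Λ(M,N) → Ext^i_Γ(M,N)` is injective for all finitely generated `Λ`-modules
`M, N`.  (Degree `0` is injectivity of restriction on `Hom`; the degrees `i ≥ 1` are
expressed by the equivalent statement, uniformly in all finitely generated modules, that any
extension of `Λ`-modules which splits after restriction to `Γ` is already split over `Λ`.) -/
theorem stmt_6 (k : Type) [Field k] (Λ : Type) [Ring Λ] [Algebra k Λ]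
    [FiniteDimensional k Λ] (Γ : Type) [Ring Γ] [Algebra k Γ]
    (s : Λ →ₗ[k] k) (hs : IsSymmetrizingForm k Λ s)
    (ι : Γ →ₐ[k] Λ) (hpar : IsParabolic k Λ Γ s ι)
    (t : ℕ) (x y : Fin t → Λ) (pr : Λ →ₗ[k] Γ)
    (hc : IsCasimirData k Λ Γ s ι x y pr)
    (hcentral : ∀ a : Λ, a * (∑ i, x i * y i) = (∑ i, x i * y i) * a)
    (hunit : IsUnit (∑ i, x i * y i)) :
    -- degree 0: restriction is injective on homomorphisms
    (∀ (M : Type) (iM1 : AddCommGroup M) (iM2 : Module Λ M)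
       (N : Type) (iN1 : AddCommGroup N) (iN2 : Module Λ N),
      Module.Finite Λ M → Module.Finite Λ N →
      letI : Module Γ M := Module.compHom M ι.toRingHom
      letI : Module Γ N := Module.compHom N ι.toRingHom
      Function.Injective (fun (f : M →ₗ[Λ] N) =>
        ({ toFun := f, map_add' := f.map_add,
           map_smul' := fun (g : Γ) (m : M) => f.map_smul (ι g) m } : M →ₗ[Γ] N))) ∧
    -- degrees `i ≥ 1`: extensions of `Λ`-modules splitting over `Γ` split over `Λ`
    (∀ (M : Type) (iM1 : AddCommGroup M) (iM2 : Module Λ M)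
       (N : Type) (iN1 : AddCommGroup N) (iN2 : Module Λ N)
       (E : Type) (iE1 : AddCommGroup E) (iE2 : Module Λ E),
      Module.Finite Λ M → Module.Finite Λ N → Module.Finite Λ E →
      ∀ (u : N →ₗ[Λ] E) (v : E →ₗ[Λ] M),
        Function.Injective u → Function.Surjective v →
        LinearMap.range u = LinearMap.ker v →
        (letI : Module Γ E := Module.compHom E ι.toRingHom
         letI : Module Γ N := Module.compHom N ι.toRingHom
         ∃ r : E →ₗ[Γ] N, ∀ z : N, r (u z) = z) →
        (∃ r : E →ₗ[Λ] N, ∀ z : N, r (u z) = z)) :=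
  stmt_6_general k Λ Γ s ι t x y pr hc hcentral hunit

end
end

section
/- Let Λ ⊇ Γ ⊇ Δ be a parabolic chain of finite dimensional symmetric algebras (Γ parabolic in Λ, Δ parabolic in Γ). Then Δ is a parabolic subalgebra of Λ, and the relative trace maps satisfy tr_Γ^Λ ∘ tr_Δ^Γ = tr_Δ^Λ on Hom_Δ(M,N) for all Λ-modules M, N. -/
noncomputable section


/-!
Composing dual bases `x, y` of `Γ ⊆ Λ` with dual bases `u, v` of `Δ ⊆ Γ` gives dual bases
`(xᵢ uⱼ), (vⱼ yᵢ)` of `Δ ⊆ Λ` for the projection `pr_Δ^Γ ∘ pr_Γ^Λ`. Nondegeneracy of the form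
on `Δ` forces this projection to be `pr_Δ^Λ`, since both are right `Δ`-linear and compatible
with `s`. Dual bases exhibit `Λ` as a direct summand of a free `Δ`-module of finite rank, so
`Δ` is parabolic; and two pairs of dual bases for the same projection define the same trace,
which gives `tr_Γ^Λ ∘ tr_Δ^Γ = tr_Δ^Λ`.
-/

theorem Module.projective_and_finite_of_comp_eq_id {R P : Type*} [Ring R] [AddCommGroup P]
    [Module R P] {n : Type*} [Fintype n] (f : (n → R) →ₗ[R] P) (g : P →ₗ[R] n → R)
    (h : f ∘ₗ g = .id) : Module.Projective R P ∧ Module.Finite R P :=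
  ⟨.of_split g f h,
    .of_surjective f fun z => ⟨g z, by simpa using LinearMap.congr_fun h z⟩⟩

namespace IsCasimirData

variable {k : Type} [Field k] {Λ : Type} [Ring Λ] [Algebra k Λ] {Γ : Type} [Ring Γ]
  [Algebra k Γ] {s : Λ →ₗ[k] k} {ι : Γ →ₐ[k] Λ} {t : ℕ} {x y : Fin t → Λ} {pr : Λ →ₗ[k] Γ}

theorem pr_mul_left (hc : IsCasimirData k Λ Γ s ι x y pr) (g : Γ) (z : Λ) :
    pr (ι g * z) = g * pr z := by
  simpa using hc.2.1 g 1 z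

theorem pr_mul_right (hc : IsCasimirData k Λ Γ s ι x y pr) (z : Λ) (g : Γ) :
    pr (z * ι g) = pr z * g := by
  simpa using hc.2.1 1 g z

theorem eq_pr_of_mul_right (hc : IsCasimirData k Λ Γ s ι x y pr)
    (hsym : IsSymmetrizingForm k Γ (s.comp ι.toLinearMap)) (p : Λ → Γ)
    (hp : ∀ z g, p (z * ι g) = p z * g) (hps : ∀ z, s (ι (p z)) = s z) (z : Λ) :
    p z = pr z := by
  by_contra hne
  obtain ⟨g, hg⟩ := hsym.2 _ (sub_ne_zero.mpr hne)
  apply hg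
  simp [sub_mul, ← hp, ← hc.pr_mul_right, hps, hc.2.2.1]

theorem isParabolic (hc : IsCasimirData k Λ Γ s ι x y pr) (hinj : Function.Injective ι)
    (hsym : IsSymmetrizingForm k Γ (s.comp ι.toLinearMap)) : IsParabolic k Λ Γ s ι := by
  refine ⟨hinj, hsym, ?_⟩
  let _ : Module Γ Λ := Module.compHom Λ ι.toRingHom
  have hsmul : ∀ (g : Γ) (z : Λ), g • z = ι g * z := fun _ _ => rfl
  let combine : (Fin t → Γ) →ₗ[Γ] Λ :=
    { toFun := fun c => ∑ i, ι (c i) * y i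
      map_add' := fun c c' => by simp [add_mul, Finset.sum_add_distrib]
      map_smul' := fun g c => by simp [hsmul, Finset.mul_sum, mul_assoc] }
  let coords : Λ →ₗ[Γ] Fin t → Γ :=
    { toFun := fun z i => pr (z * x i)
      map_add' := fun z z' => by ext; simp [add_mul]
      map_smul' := fun g z => by ext; simp [hsmul, mul_assoc, hc.pr_mul_left] }
  exact Module.projective_and_finite_of_comp_eq_id combine coords
    (LinearMap.ext fun z => (hc.2.2.2.2 z).symm)

variable {Δ : Type} [Ring Δ] [Algebra k Δ] {s' : Γ →ₗ[k] k} {ιΔ : Δ →ₐ[k] Γ} {t₂ : ℕ}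
  {u v : Fin t₂ → Γ} {prΓΔ : Γ →ₗ[k] Δ}

theorem eq_sum_trans (hc : IsCasimirData k Λ Γ s ι x y pr)
    (hc₂ : IsCasimirData k Γ Δ s' ιΔ u v prΓΔ) (z : Λ) :
    z = ∑ p : Fin t × Fin t₂,
      x p.1 * ι (u p.2) * (ι.comp ιΔ) (prΓΔ (pr (ι (v p.2) * y p.1 * z))) := by
  rw [Fintype.sum_prod_type]
  conv_lhs => rw [hc.2.2.2.1 z]
  refine Finset.sum_congr rfl fun i _ => ?_
  conv_lhs => rw [hc₂.2.2.2.1 (pr (y i * z))]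
  simp only [map_sum, Finset.mul_sum, AlgHom.comp_apply, map_mul, mul_assoc, hc.pr_mul_left]

theorem pr_pr_eq (hc : IsCasimirData k Λ Γ s ι x y pr)
    (hc₂ : IsCasimirData k Γ Δ (s.comp ι.toLinearMap) ιΔ u v prΓΔ)
    {t₃ : ℕ} {a b : Fin t₃ → Λ} {prΛΔ : Λ →ₗ[k] Δ}
    (hc₃ : IsCasimirData k Λ Δ s (ι.comp ιΔ) a b prΛΔ)
    (hsym : IsSymmetrizingForm k Δ (s.comp (ι.comp ιΔ).toLinearMap)) (z : Λ) :
    prΓΔ (pr z) = prΛΔ z :=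
  hc₃.eq_pr_of_mul_right hsym (fun z => prΓΔ (pr z))
    (fun z g => by simp [← hc₂.pr_mul_right, ← hc.pr_mul_right])
    (fun z => by simpa [hc.2.2.1] using hc₂.2.2.1 (pr z)) z

end IsCasimirData

section RelTrace

variable {Λ : Type*} [Ring Λ] {M N : Type*} [AddCommGroup M] [Module Λ M] [AddCommGroup N]
  [Module Λ N]

def relTrace {I : Type*} [Fintype I] (x y : I → Λ) (f : M →+ N) : M →+ N where
  toFun m := ∑ i, x i • f (y i • m)
  map_zero' := by simp
  map_add' m m' := by simp [Finset.sum_add_distrib]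

theorem relTrace_apply {I : Type*} [Fintype I] (x y : I → Λ) (f : M →+ N) (m : M) :
    relTrace x y f m = ∑ i, x i • f (y i • m) :=
  rfl

theorem relTrace_relTrace {I J : Type*} [Fintype I] [Fintype J] (x y : I → Λ) (u v : J → Λ)
    (f : M →+ N) :
    relTrace x y (relTrace u v f) =
      relTrace (fun p : I × J => x p.1 * u p.2) (fun p => v p.2 * y p.1) f := by
  ext m
  simp [relTrace_apply, Fintype.sum_prod_type, Finset.smul_sum, mul_smul]

/-- Two pairs of dual bases for the same projection `p` define the same trace. -/
theorem relTrace_eq_of_expansion {Γ : Type*} (ι : Γ → Λ) (p : Λ → Γ) {I L : Type*} [Fintype I]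
    [Fintype L] {x y : I → Λ} {a b : L → Λ} (hxy : ∀ z, z = ∑ i, x i * ι (p (y i * z)))
    (hab : ∀ z, z = ∑ l, ι (p (z * a l)) * b l) (f : M →+ N)
    (hf : ∀ g m, f (ι g • m) = ι g • f m) : relTrace x y f = relTrace a b f := by
  ext m
  calc relTrace x y f m
      = ∑ i, x i • f ((∑ l, ι (p (y i * a l)) * b l) • m) := by
        simp only [relTrace_apply, ← hab]
    _ = ∑ l, (∑ i, x i * ι (p (y i * a l))) • f (b l • m) := by
        simp only [Finset.sum_smul, mul_smul, map_sum, hf, Finset.smul_sum]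
        exact Finset.sum_comm
    _ = relTrace a b f m := by
        simp only [relTrace_apply, ← hxy]

end RelTrace

theorem stmt_7_general (k : Type) [Field k] (Λ : Type) [Ring Λ] [Algebra k Λ]
    (Γ : Type) [Ring Γ] [Algebra k Γ]
    (Δ : Type) [Ring Δ] [Algebra k Δ]
    (s : Λ →ₗ[k] k)
    (ιΓ : Γ →ₐ[k] Λ) (hparΓ : IsParabolic k Λ Γ s ιΓ)
    (ιΔ : Δ →ₐ[k] Γ) (hparΔ : IsParabolic k Γ Δ (s.comp ιΓ.toLinearMap) ιΔ)
    -- the relative Casimir element of `Γ ⊆ Λ`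
    (t₁ : ℕ) (x y : Fin t₁ → Λ) (prΛΓ : Λ →ₗ[k] Γ)
    (hc₁ : IsCasimirData k Λ Γ s ιΓ x y prΛΓ)
    -- the relative Casimir element of `Δ ⊆ Γ`
    (t₂ : ℕ) (u v : Fin t₂ → Γ) (prΓΔ : Γ →ₗ[k] Δ)
    (hc₂ : IsCasimirData k Γ Δ (s.comp ιΓ.toLinearMap) ιΔ u v prΓΔ)
    -- the relative Casimir element of `Δ ⊆ Λ`
    (t₃ : ℕ) (a b : Fin t₃ → Λ) (prΛΔ : Λ →ₗ[k] Δ)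
    (hc₃ : IsCasimirData k Λ Δ s (ιΓ.comp ιΔ) a b prΛΔ) :
    -- `Δ` is a parabolic subalgebra of `Λ`
    IsParabolic k Λ Δ s (ιΓ.comp ιΔ) ∧
    -- transitivity of the relative trace maps, on `Δ`-linear maps between `Λ`-modules
    (∀ (M : Type) (iM1 : AddCommGroup M) (iM2 : Module Λ M)
       (N : Type) (iN1 : AddCommGroup N) (iN2 : Module Λ N),
      ∀ f : M → N,
        (∀ m m' : M, f (m + m') = f m + f m') →
        (∀ (d : Δ) (m : M), f ((ιΓ.comp ιΔ) d • m) = (ιΓ.comp ιΔ) d • f m) →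
        ∀ m : M,
          ∑ i, x i • (∑ j, ιΓ (u j) • f (ιΓ (v j) • (y i • m))) =
            ∑ l, a l • f (b l • m)) := by
  have hsymΔ : IsSymmetrizingForm k Δ (s.comp (ιΓ.comp ιΔ).toLinearMap) := hparΔ.2.1
  refine ⟨hc₃.isParabolic (hparΓ.1.comp hparΔ.1) hsymΔ, ?_⟩
  intro M _ _ N _ _ f hadd hf m
  have hexp : ∀ z, z = ∑ p : Fin t₁ × Fin t₂,
      x p.1 * ιΓ (u p.2) * (ιΓ.comp ιΔ) (prΛΔ (ιΓ (v p.2) * y p.1 * z)) := fun z => by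
    simpa only [hc₁.pr_pr_eq hc₂ hc₃ hsymΔ] using hc₁.eq_sum_trans hc₂ z
  have htr := relTrace_eq_of_expansion _ _ hexp hc₃.2.2.2.2 (AddMonoidHom.mk' f hadd) hf
  rw [← relTrace_relTrace x y (fun j => ιΓ (u j)) (fun j => ιΓ (v j))] at htr
  exact DFunLike.congr_fun htr m

/-- Lemma 3.2: for a parabolic chain `Λ ⊇ Γ ⊇ Δ` of finite dimensional symmetric algebras,
`Δ` is a parabolic subalgebra of `Λ`, and the relative trace maps (defined via the relative
Casimir elements) satisfy `tr_Γ^Λ ∘ tr_Δ^Γ = tr_Δ^Λ` on `Hom_Δ(M,N)` for all `Λ`-modules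
`M, N`. -/
theorem stmt_7 (k : Type) [Field k] (Λ : Type) [Ring Λ] [Algebra k Λ]
    [FiniteDimensional k Λ] (Γ : Type) [Ring Γ] [Algebra k Γ] [FiniteDimensional k Γ]
    (Δ : Type) [Ring Δ] [Algebra k Δ] [FiniteDimensional k Δ]
    (s : Λ →ₗ[k] k) (hs : IsSymmetrizingForm k Λ s)
    (ιΓ : Γ →ₐ[k] Λ) (hparΓ : IsParabolic k Λ Γ s ιΓ)
    (ιΔ : Δ →ₐ[k] Γ) (hparΔ : IsParabolic k Γ Δ (s.comp ιΓ.toLinearMap) ιΔ)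
    -- the relative Casimir element of `Γ ⊆ Λ`
    (t₁ : ℕ) (x y : Fin t₁ → Λ) (prΛΓ : Λ →ₗ[k] Γ)
    (hc₁ : IsCasimirData k Λ Γ s ιΓ x y prΛΓ)
    -- the relative Casimir element of `Δ ⊆ Γ`
    (t₂ : ℕ) (u v : Fin t₂ → Γ) (prΓΔ : Γ →ₗ[k] Δ)
    (hc₂ : IsCasimirData k Γ Δ (s.comp ιΓ.toLinearMap) ιΔ u v prΓΔ)
    -- the relative Casimir element of `Δ ⊆ Λ`
    (t₃ : ℕ) (a b : Fin t₃ → Λ) (prΛΔ : Λ →ₗ[k] Δ)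
    (hc₃ : IsCasimirData k Λ Δ s (ιΓ.comp ιΔ) a b prΛΔ) :
    -- `Δ` is a parabolic subalgebra of `Λ`
    IsParabolic k Λ Δ s (ιΓ.comp ιΔ) ∧
    -- transitivity of the relative trace maps, on `Δ`-linear maps between `Λ`-modules
    (∀ (M : Type) (iM1 : AddCommGroup M) (iM2 : Module Λ M)
       (N : Type) (iN1 : AddCommGroup N) (iN2 : Module Λ N),
      ∀ f : M → N,
        (∀ m m' : M, f (m + m') = f m + f m') →
        (∀ (d : Δ) (m : M), f ((ιΓ.comp ιΔ) d • m) = (ιΓ.comp ιΔ) d • f m) →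
        ∀ m : M,
          ∑ i, x i • (∑ j, ιΓ (u j) • f (ιΓ (v j) • (y i • m))) =
            ∑ l, a l • f (b l • m)) :=
  stmt_7_general k Λ Γ Δ s ιΓ hparΓ ιΔ hparΔ t₁ x y prΛΓ hc₁ t₂ u v prΓΔ hc₂ t₃ a b prΛΔ hc₃

end
end

section
/- Let p be a prime, n an integer with n < p², and P = P₁ × ⋯ × P_m a Sylow p-subgroup of S_n where each P_i is generated by a p-cycle and these p-cycles have disjoint supports (m = ⌊n/p⌋). Then for every x ∈ S_n, the intersection P ∩ xPx⁻¹ is a direct product of groups generated by p-cycles with pairwise disjoint supports; in particular P ∩ xPx⁻¹ = Q₁ × ⋯ × Q_m with each Q_i a subgroup of some conjugate structure compatible with the product decomposition. -/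
/-!
A permutation in the group generated by pairwise disjoint cycles `g i` of prime order is a product
of powers `g i ^ k i`, each of which is `1` or again a cycle; so its cycle factors are nontrivial
powers of single generators. For `y ∈ P ⊓ xPx⁻¹`, each cycle factor `c` of `y` therefore lies in
some `⟨g i⟩` and, via the generators of `xPx⁻¹`, in `xPx⁻¹`; as `⟨g i⟩` has prime order,
`⟨c⟩ = ⟨g i⟩`, so `g i ∈ xPx⁻¹`. Since `y` is the product of its cycle factors, `P ⊓ xPx⁻¹` is
generated by those `g i` that lie in `xPx⁻¹`.
-/

open Equiv Equiv.Perm Finset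

theorem mem_zpowers_of_mem_zpowers_of_ne_one {G : Type*} [Group G] {g c : G}
    (hp : (orderOf g).Prime) (hc : c ∈ Subgroup.zpowers g) (hc1 : c ≠ 1) :
    g ∈ Subgroup.zpowers c := by
  obtain ⟨k, rfl⟩ := (orderOf_pos_iff.mp hp.pos).mem_powers_iff_mem_zpowers.mpr hc
  have hk : k.Coprime (orderOf g) :=
    Nat.coprime_comm.mp (hp.coprime_iff_not_dvd.mpr fun h => hc1 (orderOf_dvd_iff_pow_eq_one.mp h))
  obtain ⟨m, hm⟩ := exists_pow_eq_self_of_coprime hk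
  simpa only [hm] using Subgroup.npow_mem_zpowers (g ^ k) m

theorem Subgroup.exists_eq_noncommProd_of_mem_closure_range {G ι : Type*} [Group G] [Fintype ι]
    {g : ι → G} (hcomm : Pairwise fun i j => Commute (g i) (g j)) {y : G}
    (hy : y ∈ closure (Set.range g)) :
    ∃ f : ι → G, (∀ i, f i ∈ zpowers (g i)) ∧ ∃ comm, y = univ.noncommProd f comm := by
  have hcomm' : Pairwise fun i j => ∀ a b : G, a ∈ zpowers (g i) → b ∈ zpowers (g j) →
      Commute a b := by
    rintro i j hij _ _ ⟨k, rfl⟩ ⟨l, rfl⟩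
    exact ((hcomm hij).zpow_left k).zpow_right l
  rw [← Set.iUnion_singleton_eq_range, closure_iUnion] at hy
  simp_rw [← zpowers_eq_closure] at hy
  rw [← noncommPiCoprod_range (hcomm := hcomm')] at hy
  obtain ⟨f, rfl⟩ := hy
  exact ⟨fun i => f i, fun i => (f i).2, _, noncommPiCoprod_apply _ _⟩

namespace Equiv.Perm

variable {α : Type*} [Fintype α] [DecidableEq α]

theorem cycleFactorsFinset_noncommProd_eq_biUnion {ι : Type*} [DecidableEq ι] (s : Finset ι)
    (f : ι → Perm α) (comm) (hdisj : (s : Set ι).Pairwise fun i j => (f i).Disjoint (f j)) :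
    (s.noncommProd f comm).cycleFactorsFinset = s.biUnion fun i => (f i).cycleFactorsFinset := by
  induction s using Finset.induction_on with
  | empty => simp
  | insert i s hi ih =>
    rw [noncommProd_insert_of_notMem _ _ _ _ hi, biUnion_insert,
      Disjoint.cycleFactorsFinset_mul_eq_union, ih _ (hdisj.mono (by simp))]
    refine disjoint_noncommProd_right _ fun j hj => hdisj ?_ ?_ ?_
    all_goals grind

theorem IsCycle.cycleFactorsFinset_subset_of_mem_zpowers {g f : Perm α} (hg : g.IsCycle)
    (hp : (orderOf g).Prime) (hf : f ∈ Subgroup.zpowers g) : f.cycleFactorsFinset ⊆ {f} := by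
  obtain ⟨k, rfl⟩ := mem_powers_iff_mem_zpowers.mpr hf
  by_cases hk : g ^ k = 1
  · simp [hk]
  · have hcop : k.Coprime (orderOf g) := Nat.coprime_comm.mp
      (hp.coprime_iff_not_dvd.mpr fun h => hk (orderOf_dvd_iff_pow_eq_one.mp h))
    rw [(hg.pow_iff.mpr hcop).cycleFactorsFinset_eq_singleton]

section DisjointPrimeCycles

variable {ι : Type*} [Fintype ι] {g : ι → Perm α}

theorem exists_mem_zpowers_of_mem_cycleFactorsFinset
    (hg : ∀ i, (g i).IsCycle ∧ (orderOf (g i)).Prime)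
    (hdisj : Pairwise fun i j => (g i).Disjoint (g j)) {y c : Perm α}
    (hy : y ∈ Subgroup.closure (Set.range g)) (hc : c ∈ y.cycleFactorsFinset) :
    ∃ i, c ∈ Subgroup.zpowers (g i) := by
  classical
  obtain ⟨f, hf, comm, rfl⟩ :=
    Subgroup.exists_eq_noncommProd_of_mem_closure_range (fun i j hij => (hdisj hij).commute) hy
  have hfdisj : ((univ : Finset ι) : Set ι).Pairwise fun i j => (f i).Disjoint (f j) := by
    intro i _ j _ hij
    obtain ⟨k, hk⟩ := hf i
    obtain ⟨l, hl⟩ := hf j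
    rw [← hk, ← hl]
    exact (hdisj hij).zpow_disjoint_zpow k l
  rw [cycleFactorsFinset_noncommProd_eq_biUnion _ _ _ hfdisj, mem_biUnion] at hc
  obtain ⟨i, -, hci⟩ := hc
  obtain rfl :=
    mem_singleton.mp ((hg i).1.cycleFactorsFinset_subset_of_mem_zpowers (hg i).2 (hf i) hci)
  exact ⟨i, hf i⟩

theorem closure_range_inf_closure_range (hg : ∀ i, (g i).IsCycle ∧ (orderOf (g i)).Prime)
    (hdisj : Pairwise fun i j => (g i).Disjoint (g j)) {κ : Type*} [Fintype κ] {g' : κ → Perm α}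
    (hg' : ∀ j, (g' j).IsCycle ∧ (orderOf (g' j)).Prime)
    (hdisj' : Pairwise fun i j => (g' i).Disjoint (g' j)) :
    Subgroup.closure (Set.range g) ⊓ Subgroup.closure (Set.range g') =
      Subgroup.closure (g '' {i | g i ∈ Subgroup.closure (Set.range g')}) := by
  refine le_antisymm ?_ ?_
  · rintro y ⟨hy, hy'⟩
    rw [← cycleFactorsFinset_noncommProd y]
    refine Subgroup.noncommProd_mem _ _ fun c hc => ?_
    obtain ⟨i, hci⟩ := exists_mem_zpowers_of_mem_cycleFactorsFinset hg hdisj hy hc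
    obtain ⟨j, hcj⟩ := exists_mem_zpowers_of_mem_cycleFactorsFinset hg' hdisj' hy' hc
    have hgi : g i ∈ Subgroup.zpowers c :=
      mem_zpowers_of_mem_zpowers_of_ne_one (hg i).2 hci (mem_cycleFactorsFinset_iff.mp hc).1.ne_one
    have hgi' : g i ∈ Subgroup.closure (Set.range g') :=
      Subgroup.zpowers_le.mpr
        (Subgroup.zpowers_le.mpr (Subgroup.subset_closure (Set.mem_range_self j)) hcj) hgi
    exact Subgroup.zpowers_le.mpr (Subgroup.subset_closure (Set.mem_image_of_mem g hgi')) hci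
  · rw [Subgroup.closure_le]
    rintro _ ⟨i, hi, rfl⟩
    exact ⟨Subgroup.subset_closure ⟨i, rfl⟩, hi⟩

end DisjointPrimeCycles

end Equiv.Perm

theorem stmt_11_general (p n : ℕ) [Fact p.Prime]
    (P : Sylow p (Equiv.Perm (Fin n))) (g : Fin (n / p) → Equiv.Perm (Fin n))
    (hcyc : ∀ i, (g i).IsCycle ∧ (g i).support.card = p)
    (hdisj : ∀ i j, i ≠ j → (g i).Disjoint (g j))
    (hP : (P : Subgroup (Equiv.Perm (Fin n))) = Subgroup.closure (Set.range g))
    (x : Equiv.Perm (Fin n)) :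
    ∃ (t : ℕ) (_ : t ≤ n / p) (h : Fin t → Equiv.Perm (Fin n)),
      (∀ i, (h i).IsCycle ∧ (h i).support.card = p) ∧
      (∀ i j, i ≠ j → (h i).Disjoint (h j)) ∧
      (∀ i, ∃ j, h i ∈ Subgroup.zpowers (g j)) ∧
      (P : Subgroup (Equiv.Perm (Fin n))) ⊓
          ((P : Subgroup (Equiv.Perm (Fin n))).map (MulAut.conj x).toMonoidHom) =
        Subgroup.closure (Set.range h) := by
  classical
  have hg : ∀ i, (g i).IsCycle ∧ (orderOf (g i)).Prime := fun i =>
    ⟨(hcyc i).1, by rw [(hcyc i).1.orderOf, (hcyc i).2]; exact Fact.out⟩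
  set g' := fun i => MulAut.conj x (g i)
  have hg' : ∀ i, (g' i).IsCycle ∧ (orderOf (g' i)).Prime := fun i =>
    ⟨(hg i).1.conj, by simpa only [g', MulEquiv.orderOf_eq] using (hg i).2⟩
  have hPx : (P : Subgroup (Perm (Fin n))).map (MulAut.conj x).toMonoidHom =
      Subgroup.closure (Set.range g') := by
    rw [hP, MonoidHom.map_closure, ← Set.range_comp]
    rfl
  set T := univ.filter fun i => g i ∈ Subgroup.closure (Set.range g')
  refine ⟨T.card, (card_le_univ T).trans (by simp), g ∘ T.orderEmbOfFin rfl, fun _ => hcyc _,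
    fun k l hkl => hdisj _ _ ((T.orderEmbOfFin rfl).injective.ne hkl),
    fun _ => ⟨_, Subgroup.mem_zpowers _⟩, ?_⟩
  rw [hPx, hP, closure_range_inf_closure_range hg (fun i j => hdisj i j) hg'
    (fun i j hij => (hdisj i j hij).conj x), Set.range_comp, range_orderEmbOfFin]
  simp [T]

/-- Let `P` be a Sylow `p`-subgroup of `S_n` (`n < p²`) generated by `m = ⌊n/p⌋` pairwise
disjoint `p`-cycles `g i`. Then for every `x ∈ S_n` the intersection `P ∩ xPx⁻¹` is again
generated by pairwise disjoint `p`-cycles, each of which lies in one of the cyclic factors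
`⟨g j⟩` of `P`. -/
theorem stmt_11 (p n : ℕ) [Fact p.Prime] (h2 : n < p ^ 2)
    (P : Sylow p (Equiv.Perm (Fin n))) (g : Fin (n / p) → Equiv.Perm (Fin n))
    (hcyc : ∀ i, (g i).IsCycle ∧ (g i).support.card = p)
    (hdisj : ∀ i j, i ≠ j → (g i).Disjoint (g j))
    (hP : (P : Subgroup (Equiv.Perm (Fin n))) = Subgroup.closure (Set.range g))
    (x : Equiv.Perm (Fin n)) :
    ∃ (t : ℕ) (_ : t ≤ n / p) (h : Fin t → Equiv.Perm (Fin n)),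
      (∀ i, (h i).IsCycle ∧ (h i).support.card = p) ∧
      (∀ i j, i ≠ j → (h i).Disjoint (h j)) ∧
      (∀ i, ∃ j, h i ∈ Subgroup.zpowers (g j)) ∧
      (P : Subgroup (Equiv.Perm (Fin n))) ⊓
          ((P : Subgroup (Equiv.Perm (Fin n))).map (MulAut.conj x).toMonoidHom) =
        Subgroup.closure (Set.range h) :=
  stmt_11_general p n P g hcyc hdisj hP x
end
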